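/- Let m > 0. For every p ≥ 0 one has 2√(p²+m²) − m ≥ m > 0, the mass-correction integrand g(p) = p² · exp(−(13/3) p²) / (p² + m²) · [ exp(2 m √(p²+m²)) / (2√(p²+m²) − m) + 1 / (2√(p²+m²) + m) ] is strictly positive on (0,∞), and g is integrable on (0,∞); hence the mass correction δm = (1/((2π)⁵ · 8)) · (exp(−2m)/m) · ∫₀^∞ g(p) dp is a finite positive real number, contrary to the commutative case. -/
import Mathlib


open MeasureTheory

/-- Integrand of the noncommutative second-order mass correction. -/
noncomputable def g (m p : ℝ) : ℝ :=
  p ^ 2 * Real.exp (-(13 / 3) * p ^ 2) / (p ^ 2 + m ^ 2) *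
    (Real.exp (2 * m * Real.sqrt (p ^ 2 + m ^ 2)) / (2 * Real.sqrt (p ^ 2 + m ^ 2) - m) +
      1 / (2 * Real.sqrt (p ^ 2 + m ^ 2) + m))

/-- The renormalised second-order mass correction `δm`. -/
noncomputable def δm (m : ℝ) : ℝ :=
  1 / ((2 * Real.pi) ^ 5 * 8) * (Real.exp (-2 * m) / m) * ∫ p in Set.Ioi (0 : ℝ), g m p

lemma sqrt_ge_m (m p : ℝ) (hm : 0 < m) : m ≤ Real.sqrt (p ^ 2 + m ^ 2) := by
  have h : Real.sqrt (p ^ 2 + m ^ 2) ^ 2 = p ^ 2 + m ^ 2 :=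
    Real.sq_sqrt (by positivity)
  have h0 := Real.sqrt_nonneg (p ^ 2 + m ^ 2)
  nlinarith

lemma sqrt_le_pm (m p : ℝ) (hm : 0 < m) (hp : 0 ≤ p) :
    Real.sqrt (p ^ 2 + m ^ 2) ≤ p + m := by
  have h : Real.sqrt (p ^ 2 + m ^ 2) ^ 2 = p ^ 2 + m ^ 2 :=
    Real.sq_sqrt (by positivity)
  have h0 := Real.sqrt_nonneg (p ^ 2 + m ^ 2)
  nlinarith

lemma g_pos (m : ℝ) (hm : 0 < m) (p : ℝ) (hp : 0 < p) : 0 < g m p := by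
  have hsm := sqrt_ge_m m p hm
  have h1 : 0 < 2 * Real.sqrt (p ^ 2 + m ^ 2) - m := by linarith
  have h2 : 0 < 2 * Real.sqrt (p ^ 2 + m ^ 2) + m := by linarith
  unfold g
  apply mul_pos
  · apply div_pos (by positivity) (by positivity)
  · exact add_pos (div_pos (Real.exp_pos _) h1) (div_pos one_pos h2)

lemma g_le (m : ℝ) (hm : 0 < m) (p : ℝ) (hp : 0 < p) :
    g m p ≤ 2 * Real.exp (23 / 10 * m ^ 2) / m ^ 3 * (p ^ 2 * Real.exp (-p ^ 2)) := by
  have hsm := sqrt_ge_m m p hm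
  have hspm := sqrt_le_pm m p hm hp.le
  set s := Real.sqrt (p ^ 2 + m ^ 2) with hs
  have h1 : 0 < 2 * s - m := by linarith
  have h2 : 0 < 2 * s + m := by linarith
  have hE : Real.exp (2 * m * s) ≤ Real.exp (2 * m * (p + m)) :=
    Real.exp_le_exp.mpr (by nlinarith)
  have hT1 : Real.exp (2 * m * s) / (2 * s - m) ≤ Real.exp (2 * m * (p + m)) / m :=
    div_le_div₀ (Real.exp_pos _).le hE hm (by linarith)
  have hT2 : 1 / (2 * s + m) ≤ Real.exp (2 * m * (p + m)) / m := by
    have h3 : (1 : ℝ) ≤ Real.exp (2 * m * (p + m)) := Real.one_le_exp (by nlinarith)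
    exact div_le_div₀ (by positivity) h3 hm (by linarith)
  have hF : p ^ 2 * Real.exp (-(13 / 3) * p ^ 2) / (p ^ 2 + m ^ 2) ≤
      p ^ 2 * Real.exp (-(13 / 3) * p ^ 2) / m ^ 2 := by
    apply div_le_div_of_nonneg_left (by positivity) (by positivity) (by nlinarith)
  have hBnn : 0 ≤ Real.exp (2 * m * s) / (2 * s - m) + 1 / (2 * s + m) :=
    add_nonneg (div_nonneg (Real.exp_pos _).le h1.le) (div_nonneg zero_le_one h2.le)
  have key : Real.exp (-(13 / 3) * p ^ 2) * Real.exp (2 * m * (p + m)) ≤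
      Real.exp (23 / 10 * m ^ 2) * Real.exp (-p ^ 2) := by
    rw [← Real.exp_add, ← Real.exp_add]
    exact Real.exp_le_exp.mpr (by nlinarith [sq_nonneg (m - (10 / 3) * p)])
  calc g m p = p ^ 2 * Real.exp (-(13 / 3) * p ^ 2) / (p ^ 2 + m ^ 2) *
        (Real.exp (2 * m * s) / (2 * s - m) + 1 / (2 * s + m)) := rfl
    _ ≤ p ^ 2 * Real.exp (-(13 / 3) * p ^ 2) / m ^ 2 *
        (Real.exp (2 * m * (p + m)) / m + Real.exp (2 * m * (p + m)) / m) :=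
      mul_le_mul hF (add_le_add hT1 hT2) hBnn (by positivity)
    _ = 2 / m ^ 3 * (p ^ 2 * (Real.exp (-(13 / 3) * p ^ 2) * Real.exp (2 * m * (p + m)))) := by
        ring
    _ ≤ 2 / m ^ 3 * (p ^ 2 * (Real.exp (23 / 10 * m ^ 2) * Real.exp (-p ^ 2))) := by
        apply mul_le_mul_of_nonneg_left (mul_le_mul_of_nonneg_left key (by positivity))
          (by positivity)
    _ = 2 * Real.exp (23 / 10 * m ^ 2) / m ^ 3 * (p ^ 2 * Real.exp (-p ^ 2)) := by ring

lemma g_integrable (m : ℝ) (hm : 0 < m) : IntegrableOn (g m) (Set.Ioi (0 : ℝ)) := by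
  have hbase : IntegrableOn (fun x : ℝ => x ^ ((2 : ℝ) : ℝ) * Real.exp (-(1:ℝ) * x ^ 2))
      (Set.Ioi 0) := integrableOn_rpow_mul_exp_neg_mul_sq one_pos (by norm_num)
  have hbound : IntegrableOn
      (fun x : ℝ => 2 * Real.exp (23 / 10 * m ^ 2) / m ^ 3 *
        (x ^ ((2 : ℝ) : ℝ) * Real.exp (-(1:ℝ) * x ^ 2))) (Set.Ioi 0) :=
    hbase.const_mul _
  apply Integrable.mono' hbound
  · apply Measurable.aestronglyMeasurable
    unfold g
    fun_prop
  · filter_upwards [ae_restrict_mem measurableSet_Ioi] with p hp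
    have hp' : (0 : ℝ) < p := hp
    rw [Real.norm_eq_abs, abs_of_nonneg (g_pos m hm p hp').le]
    have : p ^ ((2 : ℝ) : ℝ) = p ^ 2 := by
      rw [show ((2:ℝ):ℝ) = ((2:ℕ):ℝ) by norm_num, Real.rpow_natCast]
    rw [this]
    have := g_le m hm p hp'
    calc g m p ≤ 2 * Real.exp (23 / 10 * m ^ 2) / m ^ 3 * (p ^ 2 * Real.exp (-p ^ 2)) := this
      _ = 2 * Real.exp (23 / 10 * m ^ 2) / m ^ 3 * (p ^ 2 * Real.exp (-(1:ℝ) * p ^ 2)) := by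
          ring_nf
      _ ≤ _ := le_refl _

theorem stmt9 (m : ℝ) (hm : 0 < m) :
    (∀ p : ℝ, 0 ≤ p → m ≤ 2 * Real.sqrt (p ^ 2 + m ^ 2) - m) ∧
    (∀ p : ℝ, 0 < p → 0 < g m p) ∧
    IntegrableOn (g m) (Set.Ioi (0 : ℝ)) ∧
    0 < δm m := by
  have hint := g_integrable m hm
  refine ⟨fun p _ => by have := sqrt_ge_m m p hm; linarith,
    g_pos m hm, hint, ?_⟩
  have hIpos : 0 < ∫ p in Set.Ioi (0 : ℝ), g m p := by
    refine (setIntegral_pos_iff_support_of_nonneg_ae ?_ hint).mpr ?_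
    · filter_upwards [ae_restrict_mem measurableSet_Ioi] with p hp
      exact (g_pos m hm p hp).le
    · have hsub : Set.Ioi (0 : ℝ) ⊆ Function.support (g m) ∩ Set.Ioi 0 :=
        fun p hp => ⟨(g_pos m hm p hp).ne', hp⟩
      calc (0 : ENNReal) < volume (Set.Ioi (0 : ℝ)) := by simp
        _ ≤ volume (Function.support (g m) ∩ Set.Ioi 0) := measure_mono hsub
  unfold δm
  have h1 : (0 : ℝ) < 1 / ((2 * Real.pi) ^ 5 * 8) := by positivity
  have h2 : (0 : ℝ) < Real.exp (-2 * m) / m := by positivity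
  exact mul_pos (mul_pos h1 h2) hIpos
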